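/- If T is a tree with at least 2 vertices, then gpg'(T) ≤ ℓ(T) − Δ(T) + 2, where ℓ(T) is the number of leaves of T and Δ(T) is the maximum degree of T. -/

import Mathlib

open Finset SimpleGraph

variable {V : Type*}

/-- `S` is in general position in `G`: no shortest path of `G` contains more than
two vertices of `S`. -/
def IsGPSet (G : SimpleGraph V) (S : Set V) : Prop :=
  ∀ ⦃u v : V⦄ (p : G.Walk u v), p.IsPath → p.length = G.dist u v →
    (S ∩ {x | x ∈ p.support}).ncard ≤ 2

open scoped Classical in
/-- The set of vertices that can legally be played when the set of already selected
vertices is `S`. -/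
noncomputable def playable [Fintype V] (G : SimpleGraph V) (S : Finset V) : Finset V :=
  Finset.univ.filter (fun v => v ∉ S ∧ IsGPSet G (↑(insert v S) : Set V))

open scoped Classical in
/-- Value (final set size with optimal play) of the Builder-Blocker general position game
from position `S` with the given player to move (`true` = Builder, the maximiser;
`false` = Blocker, the minimiser), computed with a fuel parameter. -/
noncomputable def gameValAux [Fintype V] (G : SimpleGraph V) : ℕ → Bool → Finset V → ℕ
  | 0, _, S => S.card
  | fuel + 1, turn, S =>
    if h : (playable G S).Nonempty then
      if turn then (playable G S).sup' h (fun v => gameValAux G fuel (!turn) (insert v S))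
      else (playable G S).inf' h (fun v => gameValAux G fuel (!turn) (insert v S))
    else S.card

/-- Value of the Builder-Blocker general position game from position `S`,
with `turn = true` meaning Builder (the maximiser) is to move. Since at most
`Fintype.card V - S.card` further moves are possible, this fuel suffices. -/
noncomputable def gameVal [Fintype V] (G : SimpleGraph V) (turn : Bool) (S : Finset V) : ℕ :=
  gameValAux G (Fintype.card V - S.card) turn S

/-- The B-game general position number: Builder moves first. -/
noncomputable def gpg [Fintype V] (G : SimpleGraph V) : ℕ := gameVal G true ∅

/-- The B'-game general position number: Blocker moves first. -/
noncomputable def gpg' [Fintype V] (G : SimpleGraph V) : ℕ := gameVal G false ∅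

open scoped Classical in
/-- The number of leaves of `G`. -/
noncomputable def leafCount [Fintype V] (G : SimpleGraph V) : ℕ :=
  (Finset.univ.filter fun v => G.degree v = 1).card

open scoped Classical in
/-- The maximum degree of `G`. -/
noncomputable def maxDeg [Fintype V] (G : SimpleGraph V) : ℕ :=
  Finset.univ.sup fun v => G.degree v


section Aux
variable {V : Type*} {T : SimpleGraph V} {u v w w' a b y l : V}


variable {V : Type*} {T : SimpleGraph V} {u v w w' a b y l : V}

lemma getVert_mem_support' (p : T.Walk u v) (i : ℕ) : p.getVert i ∈ p.support := by
  induction p generalizing i with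
  | nil => simp [Walk.getVert]
  | cons h q ih =>
    cases i with
    | zero => simp [Walk.getVert]
    | succ n => simp only [Walk.support_cons, List.mem_cons]; exact Or.inr (ih n)

lemma isPath_concat' {p : T.Walk u v} (hp : p.IsPath) (h : T.Adj v w) (hw : w ∉ p.support) :
    (p.concat h).IsPath := by
  rw [Walk.isPath_def, Walk.support_concat]
  simp [List.concat_eq_append, List.nodup_append, hp.support_nodup, hw]
  exact fun a ha e => hw (e ▸ ha)

lemma dist_add_of_mem_support [DecidableEq V] (hc : T.Connected) {p : T.Walk u v}
    (hl : p.length = T.dist u v) (hw : w ∈ p.support) :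
    T.dist u w + T.dist w v = T.dist u v ∧ (p.takeUntil w hw).length = T.dist u w ∧
      (p.dropUntil w hw).length = T.dist w v := by
  have h1 : T.dist u w ≤ (p.takeUntil w hw).length := SimpleGraph.dist_le _
  have h2 : T.dist w v ≤ (p.dropUntil w hw).length := SimpleGraph.dist_le _
  have h3 : (p.takeUntil w hw).length + (p.dropUntil w hw).length = p.length := by
    have := congrArg Walk.length (p.take_spec hw)
    rwa [Walk.length_append] at this
  have h4 : T.dist u v ≤ T.dist u w + T.dist w v := hc.dist_triangle
  omega

lemma uniq_at_dist (hc : T.Connected) {p : T.Walk u v}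
    (hl : p.length = T.dist u v) (hw : w ∈ p.support) (hw' : w' ∈ p.support)
    (hdeq : T.dist u w = T.dist u w') : w = w' := by
  classical
  obtain ⟨hb, ht, hd⟩ := dist_add_of_mem_support hc hl hw
  have hsplit : w' ∈ (p.takeUntil w hw).support ∨ w' ∈ (p.dropUntil w hw).support := by
    rw [← Walk.mem_support_append_iff, p.take_spec hw]; exact hw'
  rcases hsplit with h | h
  · obtain ⟨hb2, -, -⟩ := dist_add_of_mem_support hc ht h
    have : T.dist w' w = 0 := by omega
    exact ((hc.dist_eq_zero_iff).mp this).symm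
  · obtain ⟨hb2, -, -⟩ := dist_add_of_mem_support hc hd h
    have hw'' : w' ∈ p.support := p.support_dropUntil_subset hw h
    obtain ⟨hb3, -, -⟩ := dist_add_of_mem_support hc hl hw''
    have : T.dist w w' = 0 := by omega
    exact (hc.dist_eq_zero_iff).mp this

lemma path_eq' (hT : T.IsTree) {p q : T.Walk u v} (hp : p.IsPath) (hq : q.IsPath) : p = q := by
  obtain ⟨r, -, hr⟩ := hT.existsUnique_path u v
  rw [hr p hp, hr q hq]

lemma mem_support_of_btw (hT : T.IsTree) {p : T.Walk u v} (hp : p.IsPath)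
    (hl : p.length = T.dist u v) (h : T.dist u w + T.dist w v = T.dist u v) :
    w ∈ p.support := by
  obtain ⟨q1, hq1, hl1⟩ := hT.isConnected.exists_path_of_dist u w
  obtain ⟨q2, hq2, hl2⟩ := hT.isConnected.exists_path_of_dist w v
  have hlen : (q1.append q2).length = T.dist u v := by
    rw [Walk.length_append, hl1, hl2, h]
  have hpath : (q1.append q2).IsPath := (q1.append q2).isPath_of_length_eq_dist hlen
  have heq : q1.append q2 = p := path_eq' hT hpath hp
  rw [← heq, Walk.mem_support_append_iff]
  exact Or.inl q1.end_mem_support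

lemma dist_ne_of_adj (hT : T.IsTree) (h : T.Adj a b) : T.dist u a ≠ T.dist u b := by
  classical
  intro heq
  have hc := hT.isConnected
  obtain ⟨p, hp, hl⟩ := hc.exists_path_of_dist u a
  by_cases hb : b ∈ p.support
  · obtain ⟨hb2, -, -⟩ := dist_add_of_mem_support hc hl hb
    have hba : T.dist b a = 0 := by omega
    exact h.ne ((hc.dist_eq_zero_iff).mp hba).symm
  · have hq : (p.concat h).IsPath := isPath_concat' hp h hb
    obtain ⟨r, hr, hlr⟩ := hc.exists_path_of_dist u b
    have := congrArg Walk.length (path_eq' hT hq hr)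
    rw [Walk.length_concat] at this
    omega

noncomputable def spw (hT : T.IsTree) (u a : V) : T.Walk u a :=
  (hT.isConnected.exists_path_of_dist u a).choose

lemma spw_isPath (hT : T.IsTree) : (spw hT u a).IsPath :=
  (hT.isConnected.exists_path_of_dist u a).choose_spec.1

lemma spw_length (hT : T.IsTree) : (spw hT u a).length = T.dist u a :=
  (hT.isConnected.exists_path_of_dist u a).choose_spec.2

noncomputable def nxt (hT : T.IsTree) (u a : V) : V := (spw hT u a).getVert 1

lemma nxt_adj (hT : T.IsTree) (h : a ≠ u) : T.Adj u (nxt hT u a) := by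
  have hpos : 0 < (spw hT u a).length := by
    rw [spw_length]
    exact hT.isConnected.pos_dist_of_ne (Ne.symm h)
  have := (spw hT u a).adj_getVert_succ hpos
  rwa [Walk.getVert_zero] at this

lemma nxt_of_adj (hT : T.IsTree) (h : T.Adj u y) : nxt hT u y = y := by
  have hlen : (spw hT u y).length = 1 := by
    rw [spw_length]; exact SimpleGraph.dist_eq_one_iff_adj.mpr h
  have := (spw hT u y).getVert_length
  rwa [hlen] at this

lemma nxt_eq_of_adj_succ (hT : T.IsTree) (h : T.Adj a b) (ha : a ≠ u)
    (hd : T.dist u b = T.dist u a + 1) : nxt hT u b = nxt hT u a := by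
  classical
  have hc := hT.isConnected
  have hbp : b ∉ (spw hT u a).support := by
    intro hb
    obtain ⟨hb2, -, -⟩ := dist_add_of_mem_support hc (spw_length hT) hb
    omega
  have hq : ((spw hT u a).concat h).IsPath := isPath_concat' (spw_isPath hT) h hbp
  have hqe : (spw hT u a).concat h = spw hT u b := path_eq' hT hq (spw_isPath hT)
  have hpos : 1 ≤ (spw hT u a).length := by
    rw [spw_length]
    exact hc.pos_dist_of_ne (Ne.symm ha)
  have hga : ((spw hT u a).concat h).getVert 1 = (spw hT u a).getVert 1 := by
    rw [Walk.concat_eq_append, Walk.getVert_append]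
    by_cases h1 : 1 < (spw hT u a).length
    · simp [h1]
    · have hone : (spw hT u a).length = 1 := by omega
      rw [if_neg (by omega), hone]
      have h2 : (spw hT u a).getVert 1 = a := by
        have := (spw hT u a).getVert_length
        rwa [hone] at this
      simp [Walk.getVert, h2]
  show nxt hT u b = nxt hT u a
  rw [nxt, ← hqe, hga]
  rfl

lemma nxt_eq_of_adj (hT : T.IsTree) (h : T.Adj a b) (ha : a ≠ u) (hb : b ≠ u) :
    nxt hT u a = nxt hT u b := by
  have hc := hT.isConnected
  have hne := dist_ne_of_adj (u := u) hT h
  have hab : T.dist a b = 1 := SimpleGraph.dist_eq_one_iff_adj.mpr h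
  have ht1 : T.dist u b ≤ T.dist u a + 1 := by
    have := hc.dist_triangle (u := u) (v := a) (w := b)
    omega
  have ht2 : T.dist u a ≤ T.dist u b + 1 := by
    have := hc.dist_triangle (u := u) (v := b) (w := a)
    have := SimpleGraph.dist_comm (G := T) (u := b) (v := a)
    omega
  rcases (by omega : T.dist u b = T.dist u a + 1 ∨ T.dist u a = T.dist u b + 1) with hd | hd
  · exact (nxt_eq_of_adj_succ hT h ha hd).symm
  · exact nxt_eq_of_adj_succ hT h.symm hb hd

lemma nxt_const_walk (hT : T.IsTree) (p : T.Walk a b) (hu : u ∉ p.support) :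
    nxt hT u a = nxt hT u b := by
  induction p with
  | nil => rfl
  | @cons a' c' b' hadj q ih =>
    rw [Walk.support_cons, List.mem_cons] at hu
    push_neg at hu
    have h1 : nxt hT u a' = nxt hT u c' :=
      nxt_eq_of_adj hT hadj (Ne.symm hu.1) (fun e => hu.2 (e ▸ q.start_mem_support))
    exact h1.trans (ih hu.2)

lemma btw_of_nxt_ne (hT : T.IsTree) (ha : a ≠ u) (hb : b ≠ u)
    (hne : nxt hT u a ≠ nxt hT u b) : T.dist a u + T.dist u b = T.dist a b := by
  classical
  have hc := hT.isConnected
  obtain ⟨p, hp, hl⟩ := hc.exists_path_of_dist a b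
  by_cases hu : u ∈ p.support
  · exact (dist_add_of_mem_support hc hl hu).1
  · exact absurd (nxt_const_walk hT p hu) hne

lemma nxt_eq_of_not_btw (hT : T.IsTree) (ha : a ≠ u) (hb : b ≠ u)
    (h : T.dist a u + T.dist u b ≠ T.dist a b) : nxt hT u a = nxt hT u b := by
  by_contra hne
  exact h (btw_of_nxt_ne hT ha hb hne)

lemma exists_parent (hT : T.IsTree) (hl : l ≠ u) : ∃ pa, T.Adj pa l ∧
    T.dist u pa + 1 = T.dist u l ∧
    ∀ w, T.Adj w l → T.dist u w + 1 = T.dist u l → w = pa := by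
  classical
  have hc := hT.isConnected
  obtain ⟨p, hp, hlen⟩ := hc.exists_path_of_dist u l
  have hpos : 0 < p.length := by rw [hlen]; exact hc.pos_dist_of_ne (Ne.symm hl)
  set pa := p.getVert (p.length - 1) with hpadef
  have hadj : T.Adj pa l := by
    have := p.adj_getVert_succ (i := p.length - 1) (by omega)
    rwa [Nat.sub_add_cancel hpos, p.getVert_length] at this
  have hmem : pa ∈ p.support := getVert_mem_support' p _
  obtain ⟨h1, -, -⟩ := dist_add_of_mem_support hc hlen hmem
  have hpal : T.dist pa l = 1 := SimpleGraph.dist_eq_one_iff_adj.mpr hadj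
  refine ⟨pa, hadj, by omega, ?_⟩
  intro w hw hdw
  have hwl : T.dist w l = 1 := SimpleGraph.dist_eq_one_iff_adj.mpr hw
  have hbtw : T.dist u w + T.dist w l = T.dist u l := by omega
  have hwmem : w ∈ p.support := mem_support_of_btw hT hp hlen hbtw
  exact uniq_at_dist hc hlen hwmem hmem (by omega)

open scoped Classical in
lemma exists_leaf_in_branch [Fintype V] (hT : T.IsTree) (hy : T.Adj u y) :
    ∃ l, T.degree l = 1 ∧ l ≠ u ∧ nxt hT u l = y := by
  classical
  have hc := hT.isConnected
  set A : Finset V := Finset.univ.filter (fun z => z ≠ u ∧ nxt hT u z = y) with hA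
  have hyA : y ∈ A := by
    simp only [hA, Finset.mem_filter, Finset.mem_univ, true_and]
    exact ⟨hy.ne', nxt_of_adj hT hy⟩
  obtain ⟨l, hlA, hmax⟩ := A.exists_max_image (fun z => T.dist u z) ⟨y, hyA⟩
  simp only [hA, Finset.mem_filter, Finset.mem_univ, true_and] at hlA
  obtain ⟨hlu, hly⟩ := hlA
  obtain ⟨pa, hpa, hpad, hpau⟩ := exists_parent hT hlu
  refine ⟨l, ?_, hlu, hly⟩
  have hpamem : pa ∈ T.neighborFinset l := by rw [mem_neighborFinset]; exact hpa.symm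
  by_contra hdeg
  have hcard : (T.neighborFinset l).card = T.degree l := T.card_neighborFinset_eq_degree l
  have hge : 1 < (T.neighborFinset l).card := by
    have h0 : 0 < (T.neighborFinset l).card := card_pos.mpr ⟨pa, hpamem⟩
    omega
  obtain ⟨w, hwmem, hwpa⟩ := Finset.exists_mem_ne hge pa
  rw [mem_neighborFinset] at hwmem
  have hne := dist_ne_of_adj (u := u) hT hwmem.symm
  have hlw : T.dist l w = 1 := SimpleGraph.dist_eq_one_iff_adj.mpr hwmem
  have ht1 : T.dist u w ≤ T.dist u l + 1 := by
    have := hc.dist_triangle (u := u) (v := l) (w := w)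
    omega
  have ht2 : T.dist u l ≤ T.dist u w + 1 := by
    have := hc.dist_triangle (u := u) (v := w) (w := l)
    have := SimpleGraph.dist_comm (G := T) (u := w) (v := l)
    omega
  rcases (by omega : T.dist u w + 1 = T.dist u l ∨ T.dist u w = T.dist u l + 1) with hcase | hcase
  · exact hwpa (hpau w hwmem.symm hcase)
  · have hwu : w ≠ u := by
      intro e
      subst e
      rw [SimpleGraph.dist_self] at hcase
      omega
    have hnx : nxt hT u w = nxt hT u l := (nxt_eq_of_adj hT hwmem hlu hwu).symm
    have hwA : w ∈ A := by
      simp only [hA, Finset.mem_filter, Finset.mem_univ, true_and]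
      exact ⟨hwu, hnx.trans hly⟩
    have := hmax w hwA
    omega

lemma gp_not_btw (hT : T.IsTree) {S : Set V} (hS : IsGPSet T S) {a b c : V}
    (ha : a ∈ S) (hb : b ∈ S) (hcc : c ∈ S) (hab : a ≠ b) (hbc : b ≠ c) (hac : a ≠ c) :
    T.dist a b + T.dist b c ≠ T.dist a c := by
  intro h
  have hcon := hT.isConnected
  obtain ⟨p1, hp1, hl1⟩ := hcon.exists_path_of_dist a b
  obtain ⟨p2, hp2, hl2⟩ := hcon.exists_path_of_dist b c
  have hlen : (p1.append p2).length = T.dist a c := by rw [Walk.length_append, hl1, hl2, h]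
  have hpath := (p1.append p2).isPath_of_length_eq_dist hlen
  have h2 := hS (p1.append p2) hpath hlen
  have hsub : ({a, b, c} : Set V) ⊆ S ∩ {x | x ∈ (p1.append p2).support} := by
    intro z hz
    rcases hz with rfl | rfl | rfl
    · exact ⟨ha, by rw [Set.mem_setOf_eq, Walk.mem_support_append_iff]
                    exact Or.inl p1.start_mem_support⟩
    · exact ⟨hb, by rw [Set.mem_setOf_eq, Walk.mem_support_append_iff]
                    exact Or.inl p1.end_mem_support⟩
    · exact ⟨hcc, by rw [Set.mem_setOf_eq, Walk.mem_support_append_iff]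
                     exact Or.inr p2.end_mem_support⟩
  have h3 : ({a, b, c} : Set V).ncard = 3 := by
    rw [Set.ncard_insert_of_notMem (by simp [hab, hac]) (Set.toFinite _),
      Set.ncard_insert_of_notMem (by simp [hbc]) (Set.toFinite _), Set.ncard_singleton]
  have hfin : (S ∩ {x | x ∈ (p1.append p2).support}).Finite :=
    Set.Finite.inter_of_right (List.finite_toSet _) S
  have h4 := Set.ncard_le_ncard hsub hfin
  omega


lemma isGPSet_singleton (x : V) : IsGPSet T {x} := by
  intro u v p hp hl
  have hsub : ({x} : Set V) ∩ {z | z ∈ p.support} ⊆ {x} := Set.inter_subset_left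
  have := Set.ncard_le_ncard hsub (Set.finite_singleton x)
  rw [Set.ncard_singleton] at this
  omega


lemma gameValAux_le [Fintype V] {x : V} {N : ℕ}
    (hbound : ∀ ⦃S : Finset V⦄, x ∈ S → IsGPSet T ↑S → S.card ≤ N) :
    ∀ (fuel : ℕ) (turn : Bool) (S : Finset V), x ∈ S → IsGPSet T ↑S →
      gameValAux T fuel turn S ≤ N := by
  intro fuel
  induction fuel with
  | zero => exact fun turn S hx hS => hbound hx hS
  | succ n ih =>
    intro turn S hx hS
    classical
    rw [gameValAux]
    by_cases h : (playable T S).Nonempty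
    · rw [dif_pos h]
      cases turn with
      | false =>
        rw [if_neg (by simp)]
        obtain ⟨v, hv⟩ := h
        refine le_trans (Finset.inf'_le _ hv) ?_
        rw [playable, Finset.mem_filter] at hv
        have hv' := hv
        exact ih _ _ (Finset.mem_insert_of_mem hx) hv'.2.2
      | true =>
        rw [if_pos rfl]
        apply Finset.sup'_le
        intro v hv
        rw [playable, Finset.mem_filter] at hv
        have hv' := hv
        exact ih _ _ (Finset.mem_insert_of_mem hx) hv'.2.2
    · rw [dif_neg h]
      exact hbound hx hS

end Aux

section Aux2
variable {V : Type*} {T : SimpleGraph V}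
open scoped Classical in
lemma key_card [Fintype V] (hT : T.IsTree) {S : Finset V} {x : V} (hxS : x ∈ S)
    (hS : IsGPSet T ↑S) :
    S.card + T.degree x ≤ leafCount T + 2 ∧ T.degree x ≤ leafCount T := by
  classical
  have hc := hT.isConnected
  have hlamE : ∀ s : V, ∃ l : V, s ∈ S.erase x →
      T.degree l = 1 ∧ ∀ t ∈ S, t ≠ s → T.dist l s + T.dist s t = T.dist l t := by
    intro s
    by_cases hs : s ∈ S.erase x
    · obtain ⟨hsx, hsS⟩ := Finset.mem_erase.mp hs
      by_cases hdeg : T.degree s = 1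
      · exact ⟨s, fun _ => ⟨hdeg, fun t ht hts => by
          rw [SimpleGraph.dist_self, Nat.zero_add]⟩⟩
      · have hxs : x ≠ s := Ne.symm hsx
        have hystar := nxt_adj hT hxs
        have hmem : nxt hT s x ∈ T.neighborFinset s := (mem_neighborFinset _ _ _).mpr hystar
        have hcard : (T.neighborFinset s).card = T.degree s := T.card_neighborFinset_eq_degree s
        have hge : 1 < (T.neighborFinset s).card := by
          have h0 : 0 < (T.neighborFinset s).card := card_pos.mpr ⟨_, hmem⟩
          omega
        obtain ⟨y, hy, hyne⟩ := Finset.exists_mem_ne hge (nxt hT s x)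
        rw [mem_neighborFinset] at hy
        obtain ⟨l, hl1, hls, hlnxt⟩ := exists_leaf_in_branch hT hy
        refine ⟨l, fun _ => ⟨hl1, fun t ht hts => ?_⟩⟩
        have htnxt : nxt hT s t = nxt hT s x := by
          by_cases htx : t = x
          · rw [htx]
          · exact nxt_eq_of_not_btw hT hts hxs
              (gp_not_btw hT hS ht hsS hxS hts hsx htx)
        have hne2 : nxt hT s l ≠ nxt hT s t := by rw [hlnxt, htnxt]; exact hyne
        exact btw_of_nxt_ne hT hls hts hne2
    · exact ⟨s, fun h => absurd h hs⟩
  choose lam hlam using hlamE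
  have hmuE : ∀ y : V, ∃ l : V, y ∈ T.neighborFinset x →
      T.degree l = 1 ∧ l ≠ x ∧ nxt hT x l = y := by
    intro y
    by_cases hy : y ∈ T.neighborFinset x
    · obtain ⟨l, h1, h2, h3⟩ := exists_leaf_in_branch hT ((mem_neighborFinset _ _ _).mp hy)
      exact ⟨l, fun _ => ⟨h1, h2, h3⟩⟩
    · exact ⟨x, fun h => absurd h hy⟩
  choose mu hmu using hmuE
  have hlam_btwx : ∀ s ∈ S.erase x,
      T.dist (lam s) s + T.dist s x = T.dist (lam s) x := by
    intro s hs
    obtain ⟨hsx, hsS⟩ := Finset.mem_erase.mp hs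
    exact (hlam s hs).2 x hxS (Ne.symm hsx)
  have hlaminj : Set.InjOn lam (S.erase x) := by
    intro s hs t ht he
    by_contra hst
    have h1 := (hlam s hs).2 t ((Finset.mem_erase.mp ht).2) (Ne.symm hst)
    have h2 := (hlam t ht).2 s ((Finset.mem_erase.mp hs).2) hst
    rw [he] at h1
    have hc1 := SimpleGraph.dist_comm (G := T) (u := s) (v := t)
    have : T.dist s t = 0 := by omega
    exact hst ((hc.dist_eq_zero_iff).mp this)
  set A := (S.erase x).image lam with hAdef
  set B := (T.neighborFinset x).image mu with hBdef
  have hBinj : Set.InjOn mu (T.neighborFinset x) := by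
    intro y hy z hz he
    have h1 := (hmu y hy).2.2
    have h2 := (hmu z hz).2.2
    rw [he] at h1
    rw [← h1, h2]
  have hcardA : A.card = S.card - 1 := by
    rw [hAdef, Finset.card_image_of_injOn hlaminj, Finset.card_erase_of_mem hxS]
  have hcardB : B.card = T.degree x := by
    rw [hBdef, Finset.card_image_of_injOn hBinj, T.card_neighborFinset_eq_degree x]
  have hAL : ∀ l ∈ A, T.degree l = 1 := by
    intro l hl
    obtain ⟨s, hs, rfl⟩ := Finset.mem_image.mp hl
    exact (hlam s hs).1
  have hBL : ∀ l ∈ B, T.degree l = 1 := by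
    intro l hl
    obtain ⟨y, hy, rfl⟩ := Finset.mem_image.mp hl
    exact (hmu y hy).1
  -- the common next-vertex fact
  have hlam_nxt : ∀ s ∈ S.erase x, nxt hT x (lam s) = nxt hT x s := by
    intro s hs
    obtain ⟨hsx, hsS⟩ := Finset.mem_erase.mp hs
    have hb := hlam_btwx s hs
    have hlx : lam s ≠ x := by
      intro e
      rw [e] at hb
      have hc1 := SimpleGraph.dist_comm (G := T) (u := x) (v := s)
      have : T.dist x x = 0 := SimpleGraph.dist_self
      have : T.dist s x = 0 := by omega
      exact hsx ((hc.dist_eq_zero_iff).mp this)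
    by_contra hne
    have hbb := btw_of_nxt_ne hT hlx hsx hne
    have hc2 := SimpleGraph.dist_comm (G := T) (u := s) (v := x)
    have hzero : T.dist s x = 0 := by omega
    exact hsx ((hc.dist_eq_zero_iff).mp (hc2 ▸ hzero))
  have hABone : (A ∩ B).card ≤ 1 := by
    rw [Finset.card_le_one]
    intro l1 h1 l2 h2
    rw [Finset.mem_inter] at h1 h2
    obtain ⟨s1, hs1, he1⟩ := Finset.mem_image.mp h1.1
    obtain ⟨y1, hy1, hf1⟩ := Finset.mem_image.mp h1.2
    obtain ⟨s2, hs2, he2⟩ := Finset.mem_image.mp h2.1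
    obtain ⟨y2, hy2, hf2⟩ := Finset.mem_image.mp h2.2
    by_cases hss : s1 = s2
    · rw [← he1, ← he2, hss]
    · have hnn : nxt hT x s1 = nxt hT x s2 := by
        obtain ⟨hsx1, hsS1⟩ := Finset.mem_erase.mp hs1
        obtain ⟨hsx2, hsS2⟩ := Finset.mem_erase.mp hs2
        exact nxt_eq_of_not_btw hT hsx1 hsx2
          (gp_not_btw hT hS hsS1 hxS hsS2 hsx1 (Ne.symm hsx2) hss)
      have hy1e : y1 = nxt hT x s1 := by
        rw [← (hmu y1 hy1).2.2, hf1, ← he1, hlam_nxt s1 hs1]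
      have hy2e : y2 = nxt hT x s2 := by
        rw [← (hmu y2 hy2).2.2, hf2, ← he2, hlam_nxt s2 hs2]
      have : y1 = y2 := by rw [hy1e, hy2e, hnn]
      rw [← hf1, ← hf2, this]
  have hsub : A ∪ B ⊆ Finset.univ.filter (fun v => T.degree v = 1) := by
    intro l hl
    rw [Finset.mem_filter]
    rcases Finset.mem_union.mp hl with h | h
    · exact ⟨Finset.mem_univ _, hAL l h⟩
    · exact ⟨Finset.mem_univ _, hBL l h⟩
  have hunion : (A ∪ B).card ≤ leafCount T := by
    rw [leafCount]
    exact Finset.card_le_card (by convert hsub using 2)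
  have hS1 : 1 ≤ S.card := card_pos.mpr ⟨x, hxS⟩
  have hfinal : S.card - 1 + T.degree x ≤ leafCount T + 1 := by
    rw [← hcardA, ← hcardB, ← Finset.card_union_add_card_inter A B]
    exact Nat.add_le_add hunion hABone
  have hdb : T.degree x ≤ leafCount T := by
    rw [← hcardB]
    exact hunion.trans' (Finset.card_le_card Finset.subset_union_right)
  exact ⟨by omega, hdb⟩

end Aux2

/-- For a tree `T`, `gpg'(T) ≤ ℓ(T) - Δ(T) + 2`. -/
theorem stmt_16 {V : Type*} [Fintype V] (T : SimpleGraph V) (hT : T.IsTree)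
    (h2 : 2 ≤ Fintype.card V) :
    gpg' T ≤ leafCount T - maxDeg T + 2 := by
  classical
  have hne : Nonempty V := Fintype.card_pos_iff.mp (by omega)
  obtain ⟨x, -, hxdeg⟩ : ∃ x ∈ (Finset.univ : Finset V), maxDeg T = T.degree x := by
    rw [maxDeg]
    exact Finset.exists_mem_eq_sup _ Finset.univ_nonempty _
  have hbound : ∀ ⦃S : Finset V⦄, x ∈ S → IsGPSet T ↑S →
      S.card ≤ leafCount T + 2 - T.degree x := by
    intro S hx hS
    obtain ⟨h1, h2'⟩ := key_card hT hx hS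
    omega
  have hsing' : IsGPSet T ↑(insert x (∅ : Finset V)) := by
    have hco : (↑(insert x (∅ : Finset V)) : Set V) = {x} := by simp
    rw [hco]
    exact isGPSet_singleton x
  have hx1 : x ∈ insert x (∅ : Finset V) := Finset.mem_insert_self x ∅
  rw [gpg', gameVal, Finset.card_empty, Nat.sub_zero]
  obtain ⟨n, hn⟩ : ∃ n, Fintype.card V = n + 1 := ⟨Fintype.card V - 1, by omega⟩
  rw [hn, gameValAux]
  have hxp : x ∈ playable T ∅ := by
    rw [playable, Finset.mem_filter]
    exact ⟨Finset.mem_univ x, Finset.notMem_empty x, hsing'⟩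
  rw [dif_pos ⟨x, hxp⟩, if_neg (by simp)]
  refine le_trans (Finset.inf'_le _ hxp) ?_
  have hg := gameValAux_le (T := T) hbound n (!false) (insert x ∅) hx1 hsing'
  refine le_trans hg ?_
  rw [hxdeg]
  have hdle : T.degree x ≤ leafCount T := (key_card hT hx1 hsing').2
  omega
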